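/- arXiv:2605.30450 — 3 statements merged into one kernel-verified Lean document; each statement's English description precedes it below -/
import Mathlib

section
/- The two 9×9 matrices M1 and M2 over the polynomial ring ℚ[q1,q2] commute: M1·M2 = M2·M1. -/
open MvPolynomial Matrix

/-- The matrix of small quantum multiplication by `a1*h1 + a2*h2` on the
ambient cohomology of a Verra fourfold, in the basis
`(1, h1, h2, h1^2, h1*h2, h2^2, h1^2*h2, h1*h2^2, h1^2*h2^2)`. -/
def verraM {R : Type*} [CommRing R] (q1 q2 a1 a2 : R) : Matrix (Fin 9) (Fin 9) R :=
  let b1 := a1 * q1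
  let b2 := a2 * q2
  let c := 8 * (a1 + a2) * q1 * q2
  !![0, 2*b1, 2*b2, 0, 0, 0, c, c, 0;
     a1, 0, 0, 2*b1, 2*b2, 4*b2, 0, 0, c;
     a2, 0, 0, 4*b1, 2*b1, 2*b2, 0, 0, c;
     0, a1, 0, 0, 0, 0, 2*b2, 4*b2, 0;
     0, a2, a1, 0, 0, 0, 2*b1, 2*b2, 0;
     0, 0, a2, 0, 0, 0, 4*b1, 2*b1, 0;
     0, 0, 0, a2, a1, 0, 0, 0, 2*b2;
     0, 0, 0, 0, a2, a1, 0, 0, 2*b1;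
     0, 0, 0, 0, 0, 0, a2, a1, 0]

/-- `R = ℚ[q1, q2]`. -/
abbrev Rq : Type := MvPolynomial (Fin 2) ℚ

noncomputable def q1 : Rq := X 0
noncomputable def q2 : Rq := X 1

namespace VerraAux

@[simp] lemma cons_val_five' {α : Type*} {m : ℕ} (x : α) (u : Fin (m+5) → α) :
    vecCons x u 5 = vecHead (vecTail (vecTail (vecTail (vecTail u)))) := rfl
@[simp] lemma cons_val_six' {α : Type*} {m : ℕ} (x : α) (u : Fin (m+6) → α) :
    vecCons x u 6 = vecHead (vecTail (vecTail (vecTail (vecTail (vecTail u))))) := rfl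
@[simp] lemma cons_val_seven' {α : Type*} {m : ℕ} (x : α) (u : Fin (m+7) → α) :
    vecCons x u 7 = vecHead (vecTail (vecTail (vecTail (vecTail (vecTail (vecTail u)))))) := rfl
@[simp] lemma cons_val_eight' {α : Type*} {m : ℕ} (x : α) (u : Fin (m+8) → α) :
    vecCons x u 8 =
      vecHead (vecTail (vecTail (vecTail (vecTail (vecTail (vecTail (vecTail u))))))) := rfl

lemma verraM_one_zero {R : Type*} [CommRing R] (x y : R) :
    verraM x y 1 0 =
    !![0, 2*x, 0, 0, 0, 0, 8*x*y, 8*x*y, 0;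
       1, 0, 0, 2*x, 0, 0, 0, 0, 8*x*y;
       0, 0, 0, 4*x, 2*x, 0, 0, 0, 8*x*y;
       0, 1, 0, 0, 0, 0, 0, 0, 0;
       0, 0, 1, 0, 0, 0, 2*x, 0, 0;
       0, 0, 0, 0, 0, 0, 4*x, 2*x, 0;
       0, 0, 0, 0, 1, 0, 0, 0, 0;
       0, 0, 0, 0, 0, 1, 0, 0, 2*x;
       0, 0, 0, 0, 0, 0, 0, 1, 0] := by
  simp only [verraM]
  norm_num

lemma verraM_zero_one {R : Type*} [CommRing R] (x y : R) :
    verraM x y 0 1 =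
    !![0, 0, 2*y, 0, 0, 0, 8*x*y, 8*x*y, 0;
       0, 0, 0, 0, 2*y, 4*y, 0, 0, 8*x*y;
       1, 0, 0, 0, 0, 2*y, 0, 0, 8*x*y;
       0, 0, 0, 0, 0, 0, 2*y, 4*y, 0;
       0, 1, 0, 0, 0, 0, 0, 2*y, 0;
       0, 0, 1, 0, 0, 0, 0, 0, 0;
       0, 0, 0, 1, 0, 0, 0, 0, 2*y;
       0, 0, 0, 0, 1, 0, 0, 0, 0;
       0, 0, 0, 0, 0, 0, 1, 0, 0] := by
  simp only [verraM]
  norm_num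

set_option maxHeartbeats 2000000 in
lemma key {R : Type*} [CommRing R] (x y : R) :
    verraM x y 1 0 * verraM x y 0 1 = verraM x y 0 1 * verraM x y 1 0 := by
  rw [verraM_one_zero, verraM_zero_one]
  ext i j
  fin_cases i <;> fin_cases j <;>
    simp [Matrix.mul_apply, Fin.sum_univ_succ] <;> ring

end VerraAux

theorem verra_M1_M2_commute :
    verraM q1 q2 1 0 * verraM q1 q2 0 1 = verraM q1 q2 0 1 * verraM q1 q2 1 0 :=
  VerraAux.key q1 q2
end

section
/- The polynomial x³ divides the characteristic polynomial of the matrix E = M(2,2) in ℚ[q1,q2][x]. -/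
open MvPolynomial Matrix

/-!
`E = M(2,2)` has rank at most six over any commutative ring: it factors through a free module
of rank six. Moving the factors past each other, `charpoly (A * B) = X ^ (9 - 6) * charpoly (B * A)`
for `A : 9 × 6` and `B : 6 × 9`.
-/

theorem Matrix.X_pow_card_sub_card_dvd_charpoly_mul {m n R : Type*} [Fintype m] [DecidableEq m]
    [Fintype n] [DecidableEq n] [CommRing R] (A : Matrix m n R) (B : Matrix n m R) :
    (Polynomial.X : Polynomial R) ^ (Fintype.card m - Fintype.card n) ∣ (A * B).charpoly := by
  rcases le_total (Fintype.card n) (Fintype.card m) with hle | hle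
  · exact ⟨_, charpoly_mul_comm_of_le A B hle⟩
  · simp [Nat.sub_eq_zero_of_le hle]

section Factorization

variable {R : Type*} [CommRing R]

/-- Columns `0, 1, 2, 3, 5, 7` of `verraM q1 q2 2 2`. -/
def verraLeft (q1 q2 : R) : Matrix (Fin 9) (Fin 6) R :=
  !![0, 4*q1, 4*q2, 0, 0, 32*q1*q2;
     2, 0, 0, 4*q1, 8*q2, 0;
     2, 0, 0, 8*q1, 4*q2, 0;
     0, 2, 0, 0, 0, 8*q2;
     0, 2, 2, 0, 0, 4*q2;
     0, 0, 2, 0, 0, 4*q1;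
     0, 0, 0, 2, 0, 0;
     0, 0, 0, 0, 2, 0;
     0, 0, 0, 0, 0, 2]

def verraRight (q1 q2 : R) : Matrix (Fin 6) (Fin 9) R :=
  !![1, 0, 0, 0, -(2*q1+2*q2), 0, 0, 0, 4*q1*q2;
     0, 1, 0, 0, 0, 0, -(2*q2), 0, 0;
     0, 0, 1, 0, 0, 0, 2*q1, 0, 0;
     0, 0, 0, 1, 1, 0, 0, 0, 2*q2;
     0, 0, 0, 0, 1, 1, 0, 0, 2*q1;
     0, 0, 0, 0, 0, 0, 1, 1, 0]

theorem verraM_two_two_eq_mul (q1 q2 : R) :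
    verraM q1 q2 2 2 = verraLeft q1 q2 * verraRight q1 q2 := by
  ext i j
  fin_cases i <;> fin_cases j <;>
    simp [verraM, verraLeft, verraRight, mul_apply, Fin.sum_univ_succ] <;> ring

end Factorization

theorem verra_charpoly_cube_dvd :
    (Polynomial.X : Polynomial Rq) ^ 3 ∣ (verraM q1 q2 2 2).charpoly := by
  rw [verraM_two_two_eq_mul]
  simpa using X_pow_card_sub_card_dvd_charpoly_mul (verraLeft q1 q2) (verraRight q1 q2)
end

section
/- The matrices M1 and M2 satisfy the cubic relations M1³ = 4·q1·(M1 + M2) and M2³ = 4·q2·(M1 + M2) over ℚ[q1,q2]. -/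
open MvPolynomial Matrix

section VecAux
variable {α : Type*} {m : ℕ}
@[simp] lemma vcons_val_five (x : α) (u : Fin (m+5) → α) :
    vecCons x u 5 = vecHead (vecTail (vecTail (vecTail (vecTail u)))) := rfl
@[simp] lemma vcons_val_six (x : α) (u : Fin (m+6) → α) :
    vecCons x u 6 = vecHead (vecTail (vecTail (vecTail (vecTail (vecTail u))))) := rfl
@[simp] lemma vcons_val_seven (x : α) (u : Fin (m+7) → α) :
    vecCons x u 7 = vecHead (vecTail (vecTail (vecTail (vecTail (vecTail (vecTail u)))))) := rfl
@[simp] lemma vcons_val_eight (x : α) (u : Fin (m+8) → α) :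
    vecCons x u 8 = vecHead (vecTail (vecTail (vecTail (vecTail (vecTail (vecTail (vecTail u))))))) := rfl
end VecAux

section Aux
variable {R : Type*} [CommRing R] (u v : R)

set_option maxHeartbeats 4000000 in
lemma verra_sq1 :
    verraM u v 1 0 * verraM u v 1 0 =
    !![2*u, 0, 0, 4*u^2, 8*u*v, 8*u*v, 0, 0, 32*u^2*v;
       0, 4*u, 0, 0, 0, 0, 8*u*v, 16*u*v, 0;
       0, 4*u, 2*u, 0, 0, 0, 4*u^2, 8*u*v, 0;
       1, 0, 0, 2*u, 0, 0, 0, 0, 8*u*v;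
       0, 0, 0, 4*u, 4*u, 0, 0, 0, 8*u*v;
       0, 0, 0, 0, 4*u, 2*u, 0, 0, 4*u^2;
       0, 0, 1, 0, 0, 0, 2*u, 0, 0;
       0, 0, 0, 0, 0, 0, 4*u, 4*u, 0;
       0, 0, 0, 0, 0, 1, 0, 0, 2*u] := by
  ext i j
  fin_cases i <;> fin_cases j <;>
    simp [verraM, Matrix.mul_apply, Fin.sum_univ_succ, Matrix.vecHead, Matrix.vecTail] <;> ring

set_option maxHeartbeats 4000000 in
lemma verra_sq2 :
    verraM u v 0 1 * verraM u v 0 1 =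
    !![2*v, 0, 0, 8*u*v, 8*u*v, 4*v^2, 0, 0, 32*u*v^2;
       0, 2*v, 4*v, 0, 0, 0, 8*u*v, 4*v^2, 0;
       0, 0, 4*v, 0, 0, 0, 16*u*v, 8*u*v, 0;
       0, 0, 0, 2*v, 4*v, 0, 0, 0, 4*v^2;
       0, 0, 0, 0, 4*v, 4*v, 0, 0, 8*u*v;
       1, 0, 0, 0, 0, 2*v, 0, 0, 8*u*v;
       0, 0, 0, 0, 0, 0, 4*v, 4*v, 0;
       0, 1, 0, 0, 0, 0, 0, 2*v, 0;
       0, 0, 0, 1, 0, 0, 0, 0, 2*v] := by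
  ext i j
  fin_cases i <;> fin_cases j <;>
    simp [verraM, Matrix.mul_apply, Fin.sum_univ_succ, Matrix.vecHead, Matrix.vecTail] <;> ring

set_option maxHeartbeats 4000000 in
lemma verra_cube1 :
    (!![2*u, 0, 0, 4*u^2, 8*u*v, 8*u*v, 0, 0, 32*u^2*v;
       0, 4*u, 0, 0, 0, 0, 8*u*v, 16*u*v, 0;
       0, 4*u, 2*u, 0, 0, 0, 4*u^2, 8*u*v, 0;
       1, 0, 0, 2*u, 0, 0, 0, 0, 8*u*v;
       0, 0, 0, 4*u, 4*u, 0, 0, 0, 8*u*v;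
       0, 0, 0, 0, 4*u, 2*u, 0, 0, 4*u^2;
       0, 0, 1, 0, 0, 0, 2*u, 0, 0;
       0, 0, 0, 0, 0, 0, 4*u, 4*u, 0;
       0, 0, 0, 0, 0, 1, 0, 0, 2*u] : Matrix (Fin 9) (Fin 9) R) * verraM u v 1 0 =
    (4 * u) • (verraM u v 1 0 + verraM u v 0 1) := by
  ext i j
  fin_cases i <;> fin_cases j <;>
    simp [verraM, Matrix.mul_apply, Fin.sum_univ_succ, Matrix.vecHead, Matrix.vecTail,
      Matrix.smul_apply, Matrix.add_apply, smul_eq_mul] <;> ring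

set_option maxHeartbeats 4000000 in
lemma verra_cube2 :
    (!![2*v, 0, 0, 8*u*v, 8*u*v, 4*v^2, 0, 0, 32*u*v^2;
       0, 2*v, 4*v, 0, 0, 0, 8*u*v, 4*v^2, 0;
       0, 0, 4*v, 0, 0, 0, 16*u*v, 8*u*v, 0;
       0, 0, 0, 2*v, 4*v, 0, 0, 0, 4*v^2;
       0, 0, 0, 0, 4*v, 4*v, 0, 0, 8*u*v;
       1, 0, 0, 0, 0, 2*v, 0, 0, 8*u*v;
       0, 0, 0, 0, 0, 0, 4*v, 4*v, 0;
       0, 1, 0, 0, 0, 0, 0, 2*v, 0;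
       0, 0, 0, 1, 0, 0, 0, 0, 2*v] : Matrix (Fin 9) (Fin 9) R) * verraM u v 0 1 =
    (4 * v) • (verraM u v 1 0 + verraM u v 0 1) := by
  ext i j
  fin_cases i <;> fin_cases j <;>
    simp [verraM, Matrix.mul_apply, Fin.sum_univ_succ, Matrix.vecHead, Matrix.vecTail,
      Matrix.smul_apply, Matrix.add_apply, smul_eq_mul] <;> ring

lemma verra_gen :
    verraM u v 1 0 ^ 3 = (4 * u) • (verraM u v 1 0 + verraM u v 0 1) ∧
    verraM u v 0 1 ^ 3 = (4 * v) • (verraM u v 1 0 + verraM u v 0 1) := by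
  constructor
  · rw [pow_succ, pow_two, verra_sq1, verra_cube1]
  · rw [pow_succ, pow_two, verra_sq2, verra_cube2]

end Aux

theorem verra_cubic_relations :
    verraM q1 q2 1 0 ^ 3 = (4 * q1) • (verraM q1 q2 1 0 + verraM q1 q2 0 1) ∧
    verraM q1 q2 0 1 ^ 3 = (4 * q2) • (verraM q1 q2 1 0 + verraM q1 q2 0 1) := by
  exact verra_gen q1 q2
end
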